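/- arXiv:2211.11648 — 7 statements merged into one kernel-verified Lean document; each statement's English description precedes it below -/
import Mathlib

section
/- For all non-negative integers k and n, S_k(n) = Σ_{j=0}^{k} j! · C(n, j+1) · S(k+1, j+1), where S denotes the Stirling number of the second kind. -/
open Finset

/-- Stirling numbers of the second kind. -/
def st : ℕ → ℕ → ℕ
  | 0, 0 => 1
  | 0, _ + 1 => 0
  | _ + 1, 0 => 0
  | k + 1, j + 1 => (j + 1) * st k (j + 1) + st k j

/-- Power sum `S_k(n) = 1^k + 2^k + ⋯ + n^k` as a rational. -/
def S (k n : ℕ) : ℚ := ∑ i ∈ range n, ((i : ℚ) + 1) ^ k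

/-- The `r`-Stirling number of the second kind `{k, j}_r` (rational form). -/
def rSt (k j : ℕ) (r : ℚ) : ℚ :=
  (1 / (j.factorial : ℚ)) * ∑ i ∈ range (j + 1),
    (-1 : ℚ) ^ (j - i) * (j.choose i : ℚ) * ((i : ℚ) + r) ^ k

/-- The dual (non-central) Stirling number `{k, j}_{-r}`. -/
def nSt (k j r : ℕ) : ℚ :=
  (1 / (j.factorial : ℚ)) * ∑ i ∈ range (j + 1),
    (-1 : ℚ) ^ (j - i) * (j.choose i : ℚ) * ((i : ℚ) - r) ^ k

/-- Generalized (falling-factorial) binomial coefficient `C(x, m)`. -/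
def gch (x : ℚ) (m : ℕ) : ℚ := (∏ i ∈ range m, (x - i)) / (m.factorial : ℚ)

lemma st_eq_zero : ∀ k j, k < j → st k j = 0 := by
  intro k
  induction k with
  | zero => intro j hj; cases j with
    | zero => omega
    | succ m => rfl
  | succ k ih =>
    intro j hj
    cases j with
    | zero => omega
    | succ m =>
      show (m + 1) * st k (m + 1) + st k m = 0
      rw [ih (m+1) (by omega), ih m (by omega)]; ring

lemma key (k n : ℕ) : ((n:ℚ)+1)^k =
    ∑ j ∈ range (k+1), (j.factorial : ℚ) * (n.choose j : ℚ) * (st (k+1) (j+1) : ℚ) := by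
  induction k with
  | zero => simp [st]
  | succ k ih =>
    have hsplit : ∀ j : ℕ, st (k+2) (j+1) = (j+1) * st (k+1) (j+1) + st (k+1) j := fun j => rfl
    have : ∑ j ∈ range (k+2), (j.factorial : ℚ) * (n.choose j : ℚ) * (st (k+2) (j+1) : ℚ)
        = (∑ j ∈ range (k+2), (j.factorial : ℚ) * (n.choose j : ℚ) * (((j:ℚ)+1) * (st (k+1) (j+1) : ℚ)))
        + ∑ j ∈ range (k+2), (j.factorial : ℚ) * (n.choose j : ℚ) * (st (k+1) j : ℚ) := by
      rw [← Finset.sum_add_distrib]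
      refine Finset.sum_congr rfl fun j _ => ?_
      rw [hsplit j]; push_cast; ring
    rw [this]
    rw [Finset.sum_range_succ (fun j => (j.factorial : ℚ) * (n.choose j : ℚ) * (((j:ℚ)+1) * (st (k+1) (j+1) : ℚ)))]
    rw [st_eq_zero (k+1) (k+2) (by omega)]
    rw [Finset.sum_range_succ' (fun j => (j.factorial : ℚ) * (n.choose j : ℚ) * (st (k+1) j : ℚ))]
    have h0 : st (k+1) 0 = 0 := rfl
    rw [h0]
    simp only [Nat.cast_zero, mul_zero, add_zero]
    rw [← Finset.sum_add_distrib]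
    have : ∀ j ∈ range (k+1),
        (j.factorial : ℚ) * (n.choose j : ℚ) * (((j:ℚ)+1) * (st (k+1) (j+1) : ℚ))
        + ((j+1).factorial : ℚ) * (n.choose (j+1) : ℚ) * (st (k+1) (j+1) : ℚ)
        = ((n:ℚ)+1) * ((j.factorial : ℚ) * (n.choose j : ℚ) * (st (k+1) (j+1) : ℚ)) := by
      intro j _
      have hc : (n+1) * n.choose j = (n+1).choose (j+1) * (j+1) := Nat.add_one_mul_choose_eq n j
      have hp : (n:ℚ) * (n.choose j : ℚ) + (n.choose j : ℚ)
          = ((n+1).choose (j+1) : ℚ) * ((j:ℚ)+1) := by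
        have := congrArg (fun m : ℕ => (m : ℚ)) hc
        push_cast at this ⊢
        linarith [this]
      have hpasc : ((n+1).choose (j+1) : ℚ) = (n.choose j : ℚ) + (n.choose (j+1) : ℚ) := by
        rw [Nat.choose_succ_succ]; push_cast; ring
      have hfac : ((j+1).factorial : ℚ) = ((j:ℚ)+1) * (j.factorial : ℚ) := by
        rw [Nat.factorial_succ]; push_cast; ring
      rw [hfac]
      linear_combination (-((j:ℚ)+1) * (j.factorial:ℚ) * (st (k+1) (j+1) : ℚ)) * hpasc
        + (-(j.factorial:ℚ) * (st (k+1) (j+1) : ℚ)) * hp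
    rw [Finset.sum_congr rfl this, ← Finset.mul_sum, ← ih]
    push_cast
    ring

theorem stmt1 (k n : ℕ) :
    S k n = ∑ j ∈ range (k + 1),
      (j.factorial : ℚ) * (n.choose (j + 1) : ℚ) * (st (k + 1) (j + 1) : ℚ) := by
  induction n with
  | zero => simp [S]
  | succ n ih =>
    have hS : S k (n+1) = S k n + ((n:ℚ)+1)^k := by
      rw [S, Finset.sum_range_succ]; rfl
    rw [hS, ih, key k n, ← Finset.sum_add_distrib]
    refine Finset.sum_congr rfl fun j _ => ?_
    have : (n+1).choose (j+1) = n.choose j + n.choose (j+1) := Nat.choose_succ_succ n j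
    rw [this]; push_cast; ring
end

section
/- For any non-negative integers k, n, and any fixed non-negative integer r, S_k(n) = Σ_{j=0}^{k} j! · [C(n+1-r, j+1) + (-1)^j · C(r+j-1, j+1)] · {k,j}_r, where {k,j}_r = (1/j!) Σ_{i=0}^{j} (-1)^{j-i} C(j,i) (i+r)^k and binomial coefficients C(m, j+1) with negative m are interpreted via the polynomial extension (generalized binomial coefficients). -/
open Finset

lemma gch_zero (x : ℚ) : gch x 0 = 1 := by simp [gch]

lemma rSt_zero (k : ℕ) (r : ℚ) : rSt k 0 r = r ^ k := by simp [rSt]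

lemma gch_succ (x : ℚ) (j : ℕ) : ((j:ℚ)+1) * gch x (j+1) = gch x j * (x - j) := by
  have h1 : ((j.factorial : ℚ)) ≠ 0 := Nat.cast_ne_zero.2 (Nat.factorial_ne_zero j)
  have h2 : (((j+1).factorial : ℚ)) ≠ 0 := Nat.cast_ne_zero.2 (Nat.factorial_ne_zero _)
  unfold gch
  rw [Finset.prod_range_succ, Nat.factorial_succ]
  push_cast
  field_simp

lemma gch_pascal (x : ℚ) (j : ℕ) : gch (x+1) (j+1) = gch x (j+1) + gch x j := by
  have h1 : ((j.factorial : ℚ)) ≠ 0 := Nat.cast_ne_zero.2 (Nat.factorial_ne_zero j)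
  unfold gch
  have e1 : (∏ i ∈ range (j+1), (x + 1 - i)) = (∏ i ∈ range j, (x - i)) * (x + 1) := by
    rw [Finset.prod_range_succ' (fun i => x + 1 - (i : ℕ))]
    have h0 : x + 1 - ((0:ℕ):ℚ) = x + 1 := by push_cast; ring
    rw [h0]
    congr 1
    apply Finset.prod_congr rfl
    intro i _
    push_cast
    ring
  have e2 : (∏ i ∈ range (j+1), (x - i)) = (∏ i ∈ range j, (x - i)) * (x - j) := by
    rw [Finset.prod_range_succ]
  rw [e1, e2, Nat.factorial_succ]
  push_cast
  field_simp
  ring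

lemma gch_reflect (r : ℚ) (j : ℕ) :
    gch ((r : ℚ) + j - 1) (j+1) = (-1:ℚ)^(j+1) * gch (1 - r) (j+1) := by
  unfold gch
  have : (∏ i ∈ range (j+1), ((r : ℚ) + j - 1 - i))
      = ∏ i ∈ range (j+1), (-(1 - r - i)) := by
    rw [← Finset.prod_range_reflect (fun i => (-(1 - r - (i:ℕ))))]
    apply Finset.prod_congr rfl
    intro i hi
    have hi' : i ≤ j := Nat.lt_succ_iff.mp (Finset.mem_range.mp hi)
    have : ((j + 1 - 1 - i : ℕ) : ℚ) = (j : ℚ) - i := by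
      simp only [Nat.add_sub_cancel]
      push_cast [Nat.cast_sub hi']
      ring
    rw [this]
    ring
  rw [this]
  have : (∏ i ∈ range (j+1), (-(1 - r - (i:ℕ))))
      = (-1:ℚ)^(j+1) * ∏ i ∈ range (j+1), (1 - r - (i:ℕ)) := by
    rw [show (∏ i ∈ range (j+1), (-(1 - r - (i:ℕ))))
        = ∏ i ∈ range (j+1), ((-1:ℚ) * (1 - r - (i:ℕ))) by
      apply Finset.prod_congr rfl; intro i _; ring]
    rw [Finset.prod_mul_distrib, Finset.prod_const, Finset.card_range]
  rw [this, mul_div_assoc]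

def F (k j : ℕ) (r : ℚ) : ℚ :=
  ∑ i ∈ range (j + 1), (-1 : ℚ) ^ (j - i) * (j.choose i : ℚ) * ((i : ℚ) + r) ^ k

lemma rSt_eq (k j : ℕ) (r : ℚ) : rSt k j r = F k j r / j.factorial := by
  rw [rSt, F, one_div, div_eq_mul_inv, mul_comm]

lemma neg_one_pow_sub (i j : ℕ) (h : i ≤ j) :
    ((-1 : ℚ)) ^ (j - i) = (-1) ^ j * (-1) ^ i := by
  obtain ⟨d, rfl⟩ := Nat.exists_eq_add_of_le h
  rw [Nat.add_sub_cancel_left, pow_add, mul_right_comm, ← mul_pow]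
  norm_num

lemma F_rec (k j : ℕ) (r : ℚ) :
    F (k+1) (j+1) r = ((j:ℚ)+1+r) * F k (j+1) r + ((j:ℚ)+1) * F k j r := by
  have key : ∑ i ∈ range (j+2),
      (-1:ℚ)^(j+1-i) * ((j+1).choose i : ℚ) * (((i:ℚ) - ((j:ℚ)+1)) * ((i:ℚ)+r)^k)
      = ((j:ℚ)+1) * F k j r := by
    rw [Finset.sum_range_succ]
    have hz : ((((j+1):ℕ):ℚ) - ((j:ℚ)+1)) = 0 := by push_cast; ring
    rw [show (((j+1:ℕ):ℚ) - ((j:ℚ)+1)) * (((j+1:ℕ):ℚ)+r)^k = 0 by push_cast; ring]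
    rw [mul_zero, add_zero, F, Finset.mul_sum]
    apply Finset.sum_congr rfl
    intro i hi
    have hij : i ≤ j := Nat.lt_succ_iff.mp (Finset.mem_range.mp hi)
    have hchoose : ((j+1).choose i : ℚ) * (((j:ℚ)+1) - i) = ((j:ℚ)+1) * (j.choose i : ℚ) := by
      have h := Nat.choose_mul_succ_eq j i
      have hle : i ≤ j + 1 := hij.trans (Nat.le_succ j)
      have : ((j.choose i * (j+1) : ℕ) : ℚ) = (((j+1).choose i * (j + 1 - i) : ℕ) : ℚ) := by
        exact_mod_cast congrArg (Nat.cast : ℕ → ℚ) h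
      push_cast [Nat.cast_sub hle] at this
      linarith [this]
    have hsign : (-1:ℚ)^(j+1-i) = -(-1:ℚ)^(j-i) := by
      rw [show j + 1 - i = (j - i) + 1 by omega, pow_succ]
      ring
    rw [hsign]
    have : ((i:ℚ) - ((j:ℚ)+1)) = -((((j:ℚ)+1) - i)) := by ring
    rw [this]
    calc -(-1:ℚ)^(j-i) * ((j+1).choose i : ℚ) * (-((((j:ℚ)+1) - i)) * ((i:ℚ)+r)^k)
        = (-1:ℚ)^(j-i) * (((j+1).choose i : ℚ) * (((j:ℚ)+1) - i)) * ((i:ℚ)+r)^k := by ring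
      _ = ((j:ℚ)+1) * ((-1:ℚ)^(j-i) * (j.choose i : ℚ) * ((i:ℚ)+r)^k) := by rw [hchoose]; ring
  rw [← key, F, F, Finset.mul_sum, ← Finset.sum_add_distrib]
  apply Finset.sum_congr rfl
  intro i _
  rw [pow_succ]
  ring

lemma F_vanish (r : ℚ) : ∀ (k j : ℕ), k < j → F k j r = 0 := by
  intro k
  induction k with
  | zero =>
    intro j hj
    rw [F]
    have : ∑ i ∈ range (j+1), (-1:ℚ)^(j-i) * (j.choose i : ℚ) * ((i:ℚ)+r)^0
        = (-1:ℚ)^j * ∑ i ∈ range (j+1), (-1:ℚ)^i * (j.choose i : ℚ) := by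
      rw [Finset.mul_sum]
      apply Finset.sum_congr rfl
      intro i hi
      have hij : i ≤ j := Nat.lt_succ_iff.mp (Finset.mem_range.mp hi)
      rw [neg_one_pow_sub i j hij, pow_zero]
      ring
    rw [this]
    have h0 : j ≠ 0 := by omega
    have := Int.alternating_sum_range_choose_of_ne h0
    have hq : ∑ i ∈ range (j+1), (-1:ℚ)^i * (j.choose i : ℚ) = 0 := by
      have := congrArg (Int.cast : ℤ → ℚ) this
      push_cast at this
      convert this using 2
    rw [hq, mul_zero]
  | succ k ih =>
    intro j hj
    obtain ⟨m, rfl⟩ : ∃ m, j = m + 1 := ⟨j - 1, by omega⟩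
    rw [F_rec]
    rw [ih (m+1) (by omega), ih m (by omega)]
    ring

lemma rSt_rec (k j : ℕ) (r : ℚ) :
    rSt (k+1) (j+1) r = ((j:ℚ)+1+r) * rSt k (j+1) r + rSt k j r := by
  have h1 : ((j.factorial : ℚ)) ≠ 0 := Nat.cast_ne_zero.2 (Nat.factorial_ne_zero j)
  have h2 : (((j+1).factorial : ℚ)) ≠ 0 := Nat.cast_ne_zero.2 (Nat.factorial_ne_zero _)
  rw [rSt_eq, rSt_eq, rSt_eq, F_rec, Nat.factorial_succ]
  push_cast
  field_simp

lemma rSt_vanish (k j : ℕ) (r : ℚ) (h : k < j) : rSt k j r = 0 := by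
  rw [rSt_eq, F_vanish r k j h, zero_div]

lemma keyB (r : ℚ) : ∀ (k : ℕ) (x : ℚ),
    ∑ j ∈ range (k+1), (j.factorial : ℚ) * gch x j * rSt k j r = (x + r)^k := by
  intro k
  induction k with
  | zero => intro x; simp [gch_zero, rSt_zero]
  | succ k ih =>
    intro x
    have hxr : (x + r)^(k+1) = (x + r) * ∑ j ∈ range (k+1), (j.factorial : ℚ) * gch x j * rSt k j r := by
      rw [ih x, pow_succ]; ring
    rw [hxr, Finset.mul_sum]
    have step : ∀ j, (x + r) * ((j.factorial : ℚ) * gch x j * rSt k j r)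
        = ((j+1).factorial : ℚ) * gch x (j+1) * rSt k j r
          + ((j:ℚ) + r) * ((j.factorial : ℚ) * gch x j * rSt k j r) := by
      intro j
      have hs := gch_succ x j
      have : ((j+1).factorial : ℚ) * gch x (j+1) = (j.factorial : ℚ) * (((j:ℚ)+1) * gch x (j+1)) := by
        rw [Nat.factorial_succ]; push_cast; ring
      rw [this, hs]
      ring
    rw [Finset.sum_congr rfl (fun j _ => step j), Finset.sum_add_distrib]
    have hsecond : ∑ j ∈ range (k+1), ((j:ℚ) + r) * ((j.factorial : ℚ) * gch x j * rSt k j r)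
        = r^(k+1) + ∑ j ∈ range (k+1), (((j:ℚ)+1) + r) * (((j+1).factorial : ℚ) * gch x (j+1) * rSt k (j+1) r) := by
      rw [Finset.sum_range_succ' (fun j => ((j:ℚ) + r) * ((j.factorial : ℚ) * gch x j * rSt k j r))]
      rw [Finset.sum_range_succ (fun j => (((j:ℚ)+1) + r) * (((j+1).factorial : ℚ) * gch x (j+1) * rSt k (j+1) r))]
      rw [rSt_vanish k (k+1) r (Nat.lt_succ_self k)]
      simp [gch_zero, rSt_zero]
      rw [pow_succ]
      ring
    rw [hsecond]
    rw [Finset.sum_range_succ' (fun j => (j.factorial : ℚ) * gch x j * rSt (k+1) j r)]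
    rw [show (Nat.factorial 0 : ℚ) * gch x 0 * rSt (k+1) 0 r = r^(k+1) by
      simp [gch_zero, rSt_zero]]
    have hmain : ∑ j ∈ range (k+1), ((j+1).factorial : ℚ) * gch x (j+1) * rSt (k+1) (j+1) r
        = ∑ j ∈ range (k+1), (((j+1).factorial : ℚ) * gch x (j+1) * rSt k j r
            + (((j:ℚ)+1) + r) * (((j+1).factorial : ℚ) * gch x (j+1) * rSt k (j+1) r)) := by
      apply Finset.sum_congr rfl
      intro j _
      rw [rSt_rec k j r]
      ring
    rw [hmain, Finset.sum_add_distrib]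
    ring

theorem stmt4 (k n r : ℕ) :
    S k n = ∑ j ∈ range (k + 1), (j.factorial : ℚ) *
      (gch ((n : ℚ) + 1 - r) (j + 1) + (-1 : ℚ) ^ j * gch ((r : ℚ) + j - 1) (j + 1)) *
      rSt k j r := by
  induction n with
  | zero =>
    have hS : S k 0 = 0 := by simp [S]
    rw [hS, eq_comm]
    apply Finset.sum_eq_zero
    intro j _
    have hb : gch (((0:ℕ):ℚ) + 1 - (r:ℚ)) (j+1) + (-1:ℚ)^j * gch ((r : ℚ) + j - 1) (j + 1) = 0 := by
      rw [gch_reflect r j]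
      have h1 : ((0:ℕ):ℚ) + 1 - (r:ℚ) = 1 - r := by push_cast; ring
      rw [h1]
      have h2 : (-1:ℚ)^j * ((-1:ℚ)^(j+1)) = -1 := by
        rw [← pow_add]
        exact Odd.neg_one_pow ⟨j, by ring⟩
      rw [← mul_assoc, h2]
      ring
    rw [hb]
    ring
  | succ n ih =>
    have hS : S k (n+1) = S k n + (((n:ℚ) + 1 - r) + r)^k := by
      have hb : ((n:ℚ) + 1 - r) + r = (n:ℚ) + 1 := by ring
      rw [S, S, Finset.sum_range_succ, hb]
    have hx : (((n+1):ℕ):ℚ) + 1 - r = ((n:ℚ) + 1 - r) + 1 := by push_cast; ring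
    have hterm : ∀ j, (j.factorial : ℚ) *
        (gch ((((n+1):ℕ):ℚ) + 1 - r) (j + 1) + (-1 : ℚ) ^ j * gch ((r : ℚ) + j - 1) (j + 1)) *
        rSt k j r
        = (j.factorial : ℚ) *
        (gch ((n : ℚ) + 1 - r) (j + 1) + (-1 : ℚ) ^ j * gch ((r : ℚ) + j - 1) (j + 1)) *
        rSt k j r + (j.factorial : ℚ) * gch ((n:ℚ) + 1 - r) j * rSt k j r := by
      intro j
      rw [hx, gch_pascal ((n:ℚ) + 1 - r) j]
      ring
    rw [Finset.sum_congr rfl (fun j _ => hterm j), Finset.sum_add_distrib, ← ih,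
      keyB r k ((n:ℚ) + 1 - r), hS]
end

section
/- For any non-negative integers k ≥ 1 and n, S_k(n) = n^{k+1} + Σ_{j=1}^{k} (-1)^j · j! · C(n+j-1, j+1) · {k,j}_n, where {k,j}_n = (1/j!) Σ_{i=0}^{j} (-1)^{j-i} C(j,i) (i+n)^k. -/
open Finset

/-- `gg' k j x = (-1)^j Δ^j (y ↦ y^k) x = (-1)^j j! {k,j}_x`. -/
def gg' (k j : ℕ) (x : ℚ) : ℚ :=
  ∑ i ∈ range (j + 1), (-1 : ℚ) ^ i * (j.choose i : ℚ) * ((i : ℚ) + x) ^ k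

def D (n j : ℕ) : ℕ := ∑ t ∈ range n, (t + j - 1).choose j

lemma gg'_zero (k : ℕ) (x : ℚ) : gg' k 0 x = x ^ k := by
  simp [gg']

lemma gg'_succ (k j : ℕ) (x : ℚ) :
    gg' k (j + 1) x = gg' k j x - gg' k j (x + 1) := by
  have h1 : gg' k (j + 1) x
      = (∑ i ∈ range (j + 1),
          (-1 : ℚ) ^ (i + 1) * ((j + 1).choose (i + 1) : ℚ) * (((i : ℚ) + 1) + x) ^ k)
        + x ^ k := by
    rw [gg', Finset.sum_range_succ']
    congr 1
    · exact Finset.sum_congr rfl fun i _ => by push_cast; ring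
    · simp
  have h2 : ∀ i : ℕ, ((j + 1).choose (i + 1) : ℚ) = (j.choose i : ℚ) + (j.choose (i + 1) : ℚ) := by
    intro i; rw [Nat.choose_succ_succ']; push_cast; ring
  rw [h1]
  have h3 : (∑ i ∈ range (j + 1),
        (-1 : ℚ) ^ (i + 1) * ((j + 1).choose (i + 1) : ℚ) * (((i : ℚ) + 1) + x) ^ k)
      = (∑ i ∈ range (j + 1),
          (-1 : ℚ) ^ (i + 1) * (j.choose i : ℚ) * (((i : ℚ) + 1) + x) ^ k)
        + ∑ i ∈ range (j + 1),
          (-1 : ℚ) ^ (i + 1) * (j.choose (i + 1) : ℚ) * (((i : ℚ) + 1) + x) ^ k := by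
    rw [← Finset.sum_add_distrib]
    exact Finset.sum_congr rfl fun i _ => by rw [h2]; ring
  rw [h3]
  have h4 : (∑ i ∈ range (j + 1),
        (-1 : ℚ) ^ (i + 1) * (j.choose i : ℚ) * (((i : ℚ) + 1) + x) ^ k)
      = -gg' k j (x + 1) := by
    rw [gg', ← Finset.sum_neg_distrib]
    exact Finset.sum_congr rfl fun i _ => by ring
  have h5 : (∑ i ∈ range (j + 1),
        (-1 : ℚ) ^ (i + 1) * (j.choose (i + 1) : ℚ) * (((i : ℚ) + 1) + x) ^ k)
      = gg' k j x - x ^ k := by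
    rw [Finset.sum_range_succ, gg', Finset.sum_range_succ']
    simp only [Nat.choose_succ_self, Nat.cast_zero, mul_zero, zero_mul, add_zero,
      Nat.cast_zero, zero_add, pow_zero, Nat.choose_zero_right, Nat.cast_one, mul_one, one_mul]
    rw [add_sub_cancel_right]
    exact Finset.sum_congr rfl fun i _ => by push_cast; ring
  rw [h4, h5]
  ring

lemma pow_succ_sub (k : ℕ) (y : ℚ) :
    (y + 1) ^ k - y ^ k = ∑ s ∈ range k, (k.choose s : ℚ) * y ^ s := by
  have h := add_pow y 1 k
  rw [Finset.sum_range_succ] at h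
  simp only [one_pow, Nat.choose_self, Nat.cast_one, mul_one] at h
  rw [h, add_sub_cancel_right]
  exact Finset.sum_congr rfl fun s _ => by ring

lemma gg'_eq_zero : ∀ k j, k < j → ∀ x : ℚ, gg' k j x = 0 := by
  intro k
  induction k using Nat.strong_induction_on with
  | _ k ih =>
    intro j hkj x
    obtain ⟨j', rfl⟩ : ∃ j', j = j' + 1 := ⟨j - 1, by omega⟩
    have key : gg' k (j' + 1) x
        = ∑ s ∈ range k, -((k.choose s : ℚ) * gg' s j' x) := by
      rw [gg'_succ, gg', gg', ← Finset.sum_sub_distrib]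
      have rhs : ∑ s ∈ range k, -((k.choose s : ℚ) * gg' s j' x)
          = ∑ i ∈ range (j' + 1), ∑ s ∈ range k,
              -((k.choose s : ℚ) * ((-1 : ℚ) ^ i * (j'.choose i : ℚ) * ((i : ℚ) + x) ^ s)) := by
        rw [Finset.sum_comm]
        refine Finset.sum_congr rfl fun s _ => ?_
        rw [gg', Finset.mul_sum, ← Finset.sum_neg_distrib]
      rw [rhs]
      refine Finset.sum_congr rfl fun i _ => ?_
      have hps := pow_succ_sub k ((i : ℚ) + x)
      calc (-1 : ℚ) ^ i * (j'.choose i : ℚ) * ((i : ℚ) + x) ^ k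
            - (-1 : ℚ) ^ i * (j'.choose i : ℚ) * ((i : ℚ) + (x + 1)) ^ k
          = -((-1 : ℚ) ^ i * (j'.choose i : ℚ) *
              ((((i : ℚ) + x) + 1) ^ k - ((i : ℚ) + x) ^ k)) := by ring
        _ = -((-1 : ℚ) ^ i * (j'.choose i : ℚ) *
              ∑ s ∈ range k, (k.choose s : ℚ) * ((i : ℚ) + x) ^ s) := by rw [hps]
        _ = ∑ s ∈ range k,
              -((k.choose s : ℚ) * ((-1 : ℚ) ^ i * (j'.choose i : ℚ) * ((i : ℚ) + x) ^ s)) := by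
            rw [Finset.mul_sum, ← Finset.sum_neg_distrib]
            exact Finset.sum_congr rfl fun s _ => by ring
    rw [key]
    apply Finset.sum_eq_zero
    intro s hs
    have hs' : s < k := Finset.mem_range.mp hs
    rw [ih s hs' j' (by omega) x]
    ring

lemma D_succ (n j : ℕ) : D (n + 1) j = D n j + (n + j - 1).choose j := by
  rw [D, Finset.sum_range_succ]; rfl

lemma D_zero (n : ℕ) : D n 0 = n := by
  simp [D]

lemma D_hockey (j : ℕ) (hj : 1 ≤ j) : ∀ n, D n j = (n + j - 1).choose (j + 1) := by
  intro n
  induction n with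
  | zero =>
    have : D 0 j = 0 := by simp [D]
    rw [this]
    exact (Nat.choose_eq_zero_of_lt (by omega)).symm
  | succ n ihn =>
    rw [D_succ, ihn]
    have h2 : n + 1 + j - 1 = (n + j - 1) + 1 := by omega
    rw [h2, Nat.choose_succ_succ' (n + j - 1) j]
    exact Nat.add_comm _ _

lemma main_lemma (k : ℕ) (hk : 1 ≤ k) (n : ℕ) :
    (∑ i ∈ range n, ((i : ℚ) + 1) ^ k)
      = ∑ j ∈ range (k + 1), (D n j : ℚ) * gg' k j (n : ℚ) := by
  induction n with
  | zero => simp [D]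
  | succ n ihn =>
    rw [Finset.sum_range_succ, ihn]
    have hgg : ∀ j, gg' k j (((n : ℕ) + 1 : ℕ) : ℚ) = gg' k j n - gg' k (j + 1) n := by
      intro j
      have := gg'_succ k j (n : ℚ)
      push_cast
      linarith
    have hsplit : ∑ j ∈ range (k + 1), (D (n + 1) j : ℚ) * gg' k j ((n + 1 : ℕ) : ℚ)
        = (∑ j ∈ range (k + 1), (D n j : ℚ) * gg' k j (n : ℚ))
          + ((∑ j ∈ range (k + 1), ((n + j - 1).choose j : ℚ) * gg' k j (n : ℚ))
            - ∑ j ∈ range (k + 1), (D (n + 1) j : ℚ) * gg' k (j + 1) (n : ℚ)) := by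
      rw [← Finset.sum_sub_distrib, ← Finset.sum_add_distrib]
      refine Finset.sum_congr rfl fun j _ => ?_
      rw [hgg j]
      have hD : (D (n + 1) j : ℚ) = (D n j : ℚ) + ((n + j - 1).choose j : ℚ) := by
        rw [D_succ]; push_cast; ring
      rw [hD]
      ring
    rw [hsplit]
    have key : (∑ j ∈ range (k + 1), ((n + j - 1).choose j : ℚ) * gg' k j (n : ℚ))
          - (∑ j ∈ range (k + 1), (D (n + 1) j : ℚ) * gg' k (j + 1) (n : ℚ))
        = ((n : ℚ) + 1) ^ k := by
      rw [Finset.sum_range_succ'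
        (fun j => ((n + j - 1).choose j : ℚ) * gg' k j (n : ℚ)) k]
      rw [Finset.sum_range_succ
        (fun j => (D (n + 1) j : ℚ) * gg' k (j + 1) (n : ℚ)) k]
      rw [gg'_eq_zero k (k + 1) (by omega) (n : ℚ), mul_zero, add_zero]
      have hc0 : ((n - 1).choose 0 : ℚ) * gg' k 0 (n : ℚ) = (n : ℚ) ^ k := by
        simp [gg'_zero]
      rw [hc0]
      have hsub : (∑ j ∈ range k, ((n + (j + 1) - 1).choose (j + 1) : ℚ) * gg' k (j + 1) (n : ℚ))
            - ∑ j ∈ range k, (D (n + 1) j : ℚ) * gg' k (j + 1) (n : ℚ)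
          = -gg' k 1 (n : ℚ) := by
        rw [← Finset.sum_sub_distrib]
        have step : ∀ j ∈ range k,
            ((n + (j + 1) - 1).choose (j + 1) : ℚ) * gg' k (j + 1) (n : ℚ)
              - (D (n + 1) j : ℚ) * gg' k (j + 1) (n : ℚ)
            = if j = 0 then -gg' k 1 (n : ℚ) else 0 := by
          intro j _
          rcases Nat.eq_zero_or_pos j with hj | hj
          · subst hj
            have e0 : n + (0 + 1) - 1 = n := by omega
            rw [if_pos rfl, e0, D_zero, Nat.choose_one_right]
            push_cast
            ring
          · have hD : D (n + 1) j = (n + (j + 1) - 1).choose (j + 1) := by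
              rw [D_hockey j hj (n + 1)]
              congr 1
              omega
            rw [hD, if_neg (by omega)]
            ring
        rw [Finset.sum_congr rfl step, Finset.sum_ite_eq' (range k) 0
          (fun _ => -gg' k 1 (n : ℚ))]
        rw [if_pos (Finset.mem_range.mpr (by omega))]
      have e1 : gg' k 1 (n : ℚ) = (n : ℚ) ^ k - ((n : ℚ) + 1) ^ k := by
        have := gg'_succ k 0 (n : ℚ)
        rw [gg'_zero, gg'_zero] at this
        exact this
      linarith [hsub, e1]
    rw [key]

lemma gg'_eq_rSt (k J : ℕ) (x : ℚ) :
    gg' k J x = (-1 : ℚ) ^ J * (J.factorial : ℚ) * rSt k J x := by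
  have hterm : ∀ i ∈ range (J + 1),
      (-1 : ℚ) ^ i * (J.choose i : ℚ) * ((i : ℚ) + x) ^ k
        = (-1 : ℚ) ^ J * ((-1 : ℚ) ^ (J - i) * (J.choose i : ℚ) * ((i : ℚ) + x) ^ k) := by
    intro i hi
    have hij : i ≤ J := by
      have := Finset.mem_range.mp hi; omega
    have h : (-1 : ℚ) ^ (J - i) * (-1 : ℚ) ^ i = (-1 : ℚ) ^ J := by
      rw [← pow_add, Nat.sub_add_cancel hij]
    have hs : (-1 : ℚ) ^ (J - i) * (-1 : ℚ) ^ (J - i) = 1 := by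
      rw [← pow_add]
      exact Even.neg_one_pow ⟨J - i, rfl⟩
    calc (-1 : ℚ) ^ i * (J.choose i : ℚ) * ((i : ℚ) + x) ^ k
        = ((-1 : ℚ) ^ (J - i) * (-1 : ℚ) ^ (J - i)) *
            ((-1 : ℚ) ^ i * (J.choose i : ℚ) * ((i : ℚ) + x) ^ k) := by rw [hs]; ring
      _ = ((-1 : ℚ) ^ (J - i) * (-1 : ℚ) ^ i) *
            ((-1 : ℚ) ^ (J - i) * (J.choose i : ℚ) * ((i : ℚ) + x) ^ k) := by ring
      _ = (-1 : ℚ) ^ J * ((-1 : ℚ) ^ (J - i) * (J.choose i : ℚ) * ((i : ℚ) + x) ^ k) := by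
            rw [h]
  rw [gg', Finset.sum_congr rfl hterm, ← Finset.mul_sum, rSt]
  have hfac : (J.factorial : ℚ) ≠ 0 := by
    exact_mod_cast J.factorial_ne_zero
  field_simp

theorem stmt6 (k n : ℕ) (hk : 1 ≤ k) :
    S k n = (n : ℚ) ^ (k + 1) + ∑ j ∈ Icc 1 k,
      (-1 : ℚ) ^ j * (j.factorial : ℚ) * ((n + j - 1).choose (j + 1) : ℚ) * rSt k j n := by
  have hM := main_lemma k hk n
  simp only [S]
  rw [hM, Finset.sum_range_succ' (fun j => (D n j : ℚ) * gg' k j (n : ℚ)) k]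
  have h0 : (D n 0 : ℚ) * gg' k 0 (n : ℚ) = (n : ℚ) ^ (k + 1) := by
    rw [D_zero, gg'_zero]; ring
  rw [h0]
  have hIcc : Finset.Icc 1 k = Finset.Ico 1 (k + 1) := by
    rw [Finset.Ico_add_one_right_eq_Icc]
  rw [hIcc, Finset.sum_Ico_eq_sum_range]
  simp only [Nat.add_sub_cancel]
  rw [add_comm]
  congr 1
  refine Finset.sum_congr rfl fun j _ => ?_
  have h1 : 1 + j = j + 1 := by omega
  rw [h1]
  rw [D_hockey (j + 1) (by omega) n, gg'_eq_rSt]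
  ring
end

section
/- For any non-negative integers k and n, S_k(n) = (-1)^k · ( -[k=0] + Σ_{j=0}^{k} j! · C(n+1, j+1) · {k,j}_{-n} ), where {k,j}_{-n} = (1/j!) Σ_{i=0}^{j} (-1)^{j-i} C(j,i) (i-n)^k. -/
open Finset

lemma negpow {i j : ℕ} (h : i ≤ j) : ((-1:ℚ))^(j-i) = (-1)^j * (-1)^i := by
  obtain ⟨d, rfl⟩ := Nat.exists_eq_add_of_le h
  rw [Nat.add_sub_cancel_left, pow_add, mul_right_comm, ← mul_pow]
  norm_num

lemma altsum (M : ℕ) : ∑ t ∈ range (M+1), (-1:ℚ)^t * (M.choose t : ℚ) =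
    if M = 0 then 1 else 0 := by
  have h := @Int.alternating_sum_range_choose M
  have h2 : ((∑ m ∈ range (M + 1), ((-1) ^ m * M.choose m : ℤ) : ℤ) : ℚ)
      = ((if M = 0 then (1:ℤ) else 0 : ℤ) : ℚ) := by rw [h]
  push_cast at h2
  convert h2 using 2

lemma vanish : ∀ (k j : ℕ) (c : ℚ), k < j →
    ∑ i ∈ range (j + 1), (-1:ℚ)^(j-i) * (j.choose i : ℚ) * ((i:ℚ) + c)^k = 0 := by
  intro k
  induction k with
  | zero =>
    intro j c hj
    simp only [pow_zero, mul_one]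
    have : ∑ i ∈ range (j+1), (-1:ℚ)^(j-i) * (j.choose i : ℚ)
        = (-1:ℚ)^j * ∑ i ∈ range (j+1), (-1:ℚ)^i * (j.choose i : ℚ) := by
      rw [mul_sum]
      refine sum_congr rfl fun i hi => ?_
      rw [negpow (Nat.lt_succ_iff.mp (mem_range.mp hi))]; ring
    rw [this, altsum, if_neg (by omega)]
    ring
  | succ k ih =>
    intro j c hj
    obtain ⟨m, rfl⟩ : ∃ m, j = m + 1 := ⟨j - 1, by omega⟩
    have split : ∀ i : ℕ, (-1:ℚ)^(m+1-i) * ((m+1).choose i : ℚ) * ((i:ℚ) + c)^(k+1)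
        = (-1:ℚ)^(m+1-i) * ((m+1).choose i : ℚ) * (i:ℚ) * ((i:ℚ) + c)^k
          + c * ((-1:ℚ)^(m+1-i) * ((m+1).choose i : ℚ) * ((i:ℚ) + c)^k) := by
      intro i; ring
    rw [Finset.sum_congr rfl (fun i _ => split i), Finset.sum_add_distrib, ← mul_sum,
      ih (m+1) c (by omega), mul_zero, add_zero]
    -- remaining: ∑ i ∈ range (m+2), (-1)^(m+1-i) * C(m+1,i) * i * (i+c)^k = 0
    rw [Finset.sum_range_succ']
    simp only [Nat.cast_zero, mul_zero, zero_mul, add_zero]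
    push_cast
    have term : ∀ t : ℕ, (-1:ℚ)^(m-t) * ((m+1).choose (t+1) : ℚ) * ((t:ℚ)+1) * (((t:ℕ):ℚ)+1 + c)^k
        = ((m:ℚ)+1) * ((-1:ℚ)^(m-t) * (m.choose t : ℚ) * ((t:ℚ) + (c+1))^k) := by
      intro t
      have h2 : ((m+1).choose (t+1) : ℚ) * ((t:ℚ)+1) = ((m:ℚ)+1) * (m.choose t : ℚ) := by
        have h0 := Nat.add_one_mul_choose_eq m t
        have h0' : ((m+1) * m.choose t : ℚ) = ((m+1).choose (t+1) : ℚ) * ((t:ℚ)+1) := by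
          exact_mod_cast h0
        linarith [h0']
      have h3 : ((t:ℚ)+1+c) = (t:ℚ) + (c+1) := by ring
      rw [h3]
      calc (-1:ℚ)^(m-t) * ((m+1).choose (t+1) : ℚ) * ((t:ℚ)+1) * ((t:ℚ) + (c+1))^k
          = (-1:ℚ)^(m-t) * (((m+1).choose (t+1) : ℚ) * ((t:ℚ)+1)) * ((t:ℚ) + (c+1))^k := by ring
        _ = ((m:ℚ)+1) * ((-1:ℚ)^(m-t) * (m.choose t : ℚ) * ((t:ℚ) + (c+1))^k) := by rw [h2]; ring
    calc ∑ t ∈ range (m+1), (-1:ℚ)^(m-t) * ((m+1).choose (t+1) : ℚ) * (((t:ℕ):ℚ)+1) * (((t:ℕ):ℚ)+1 + c)^k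
        = ∑ t ∈ range (m+1), ((m:ℚ)+1) * ((-1:ℚ)^(m-t) * (m.choose t : ℚ) * ((t:ℚ) + (c+1))^k) := by
          refine sum_congr rfl fun t _ => ?_; exact term t
      _ = ((m:ℚ)+1) * ∑ t ∈ range (m+1), (-1:ℚ)^(m-t) * (m.choose t : ℚ) * ((t:ℚ) + (c+1))^k := by
          rw [mul_sum]
      _ = 0 := by rw [ih m (c+1) (by omega), mul_zero]


lemma key_s9 (m K i : ℕ) (hm : m ≤ K) :
    ∑ j ∈ Ico i (K+1), (-1:ℚ)^(j-i) * (m.choose j : ℚ) * (j.choose i : ℚ)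
      = if i = m then 1 else 0 := by
  rcases Nat.lt_or_ge m i with hi | hi
  · rw [if_neg (by omega)]
    refine Finset.sum_eq_zero fun j hj => ?_
    have : m < j := lt_of_lt_of_le hi (mem_Ico.mp hj).1
    rw [Nat.choose_eq_zero_of_lt this]
    simp
  · -- i ≤ m
    have hreindex : ∑ j ∈ Ico i (K+1), (-1:ℚ)^(j-i) * (m.choose j : ℚ) * (j.choose i : ℚ)
        = ∑ t ∈ range (K+1-i), (-1:ℚ)^t * (m.choose (i+t) : ℚ) * ((i+t).choose i : ℚ) := by
      rw [Finset.sum_Ico_eq_sum_range]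
      refine sum_congr rfl fun t _ => ?_
      rw [Nat.add_sub_cancel_left]
    rw [hreindex]
    have hprod : ∀ t : ℕ, (m.choose (i+t) : ℚ) * ((i+t).choose i : ℚ)
        = (m.choose i : ℚ) * ((m-i).choose t : ℚ) := by
      intro t
      rcases le_or_gt (i+t) m with h | h
      · have := Nat.choose_mul (n := m) (Nat.le_add_right i t)
        rw [Nat.add_sub_cancel_left] at this
        exact_mod_cast this
      · rw [Nat.choose_eq_zero_of_lt h, Nat.choose_eq_zero_of_lt (show m - i < t by omega)]
        simp
    have step2 : ∑ t ∈ range (K+1-i), (-1:ℚ)^t * (m.choose (i+t) : ℚ) * ((i+t).choose i : ℚ)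
        = (m.choose i : ℚ) * ∑ t ∈ range (K+1-i), (-1:ℚ)^t * ((m-i).choose t : ℚ) := by
      rw [mul_sum]
      refine sum_congr rfl fun t _ => ?_
      rw [mul_assoc, hprod t]; ring
    rw [step2]
    have htrunc : ∑ t ∈ range (K+1-i), (-1:ℚ)^t * ((m-i).choose t : ℚ)
        = ∑ t ∈ range (m-i+1), (-1:ℚ)^t * ((m-i).choose t : ℚ) := by
      symm
      refine Finset.sum_subset (Finset.range_subset_range.mpr (by omega)) fun t ht ht2 => ?_
      have : m - i < t := by simp only [mem_range] at ht ht2; omega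
      rw [Nat.choose_eq_zero_of_lt this]; simp
    rw [htrunc, altsum (m-i)]
    rcases eq_or_ne i m with h | h
    · subst h; simp
    · rw [if_neg (by omega), if_neg h, mul_zero]

lemma inversion (f : ℕ → ℚ) (K m : ℕ) (hm : m ≤ K) :
    ∑ j ∈ range (K+1), (m.choose j : ℚ) *
      ∑ i ∈ range (j+1), (-1:ℚ)^(j-i) * (j.choose i : ℚ) * f i = f m := by
  have e1 : ∑ j ∈ range (K+1), (m.choose j : ℚ) *
      ∑ i ∈ range (j+1), (-1:ℚ)^(j-i) * (j.choose i : ℚ) * f i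
      = ∑ j ∈ Ico 0 (K+1), ∑ i ∈ Ico 0 (j+1),
        (m.choose j : ℚ) * ((-1:ℚ)^(j-i) * (j.choose i : ℚ) * f i) := by
    rw [← range_eq_Ico]
    refine sum_congr rfl fun j _ => ?_
    rw [mul_sum, range_eq_Ico]
  rw [e1, ← sum_Ico_Ico_comm 0 (K+1) (fun i j => (m.choose j : ℚ) * ((-1:ℚ)^(j-i) * (j.choose i : ℚ) * f i))]
  have e2 : ∀ i ∈ Ico 0 (K+1), ∑ j ∈ Ico i (K+1),
      (m.choose j : ℚ) * ((-1:ℚ)^(j-i) * (j.choose i : ℚ) * f i)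
      = (if i = m then 1 else 0) * f i := by
    intro i _
    rw [← key_s9 m K i hm, sum_mul]
    refine sum_congr rfl fun j _ => ?_; ring
  rw [sum_congr rfl e2, ← range_eq_Ico]
  have : ∀ x ∈ range (K+1), (if x = m then (1:ℚ) else 0) * f x = if x = m then f x else 0 := by
    intro x _; split <;> simp
  rw [sum_congr rfl this, Finset.sum_ite_eq' (range (K+1)) m f, if_pos (mem_range.mpr (by omega))]

lemma hockeyN (n j : ℕ) : ∑ m ∈ range (n+1), m.choose j = (n+1).choose (j+1) := by
  rw [← Nat.sum_Icc_choose n j]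
  symm
  refine Finset.sum_subset (fun x hx => mem_range.mpr (by simpa using (mem_Icc.mp hx).2.trans_lt (by omega : n < n + 1))) fun x hx hx2 => ?_
  exact Nat.choose_eq_zero_of_lt (by simp only [mem_range, mem_Icc] at hx hx2; omega)

lemma pointwise (k n m : ℕ) :
    ∑ j ∈ range (k+1), (m.choose j : ℚ) *
      ∑ i ∈ range (j+1), (-1:ℚ)^(j-i) * (j.choose i : ℚ) * ((i:ℚ) - n)^k
      = ((m:ℚ) - n)^k := by
  set f : ℕ → ℚ := fun i => ((i:ℚ) - n)^k with hf
  set g : ℕ → ℚ := fun j => (m.choose j : ℚ) *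
      ∑ i ∈ range (j+1), (-1:ℚ)^(j-i) * (j.choose i : ℚ) * f i with hg
  have hext : ∑ j ∈ range (k+1), g j = ∑ j ∈ range (max k m + 1), g j := by
    refine Finset.sum_subset (Finset.range_subset_range.mpr (by omega)) fun j hj hj2 => ?_
    have hkj : k < j := by simp only [mem_range] at hj hj2; omega
    have hz := vanish k j (-(n:ℚ)) hkj
    have : ∑ i ∈ range (j+1), (-1:ℚ)^(j-i) * (j.choose i : ℚ) * f i = 0 := by
      rw [← hz]; refine sum_congr rfl fun i _ => ?_; rw [hf]; ring_nf
    rw [hg]; simp only [this, mul_zero]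
  rw [hext]
  exact inversion f (max k m) m (by omega)

theorem stmt9 (k n : ℕ) :
    S k n = (-1 : ℚ) ^ k * (-(if k = 0 then (1 : ℚ) else 0) +
      ∑ j ∈ range (k + 1), (j.factorial : ℚ) * ((n + 1).choose (j + 1) : ℚ) * nSt k j n) := by
  set D : ℕ → ℚ := fun j => ∑ i ∈ range (j+1), (-1:ℚ)^(j-i) * (j.choose i : ℚ) * ((i:ℚ) - n)^k with hD
  have hfac : ∀ j : ℕ, (j.factorial : ℚ) * ((n + 1).choose (j + 1) : ℚ) * nSt k j n
      = ((n+1).choose (j+1) : ℚ) * D j := by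
    intro j
    rw [nSt, hD]
    have : (j.factorial : ℚ) ≠ 0 := by exact_mod_cast j.factorial_ne_zero
    field_simp
  have main : ∑ j ∈ range (k+1), ((n+1).choose (j+1) : ℚ) * D j
      = ∑ m ∈ range (n+1), ((m:ℚ) - n)^k := by
    have h1 : ∀ j, ((n+1).choose (j+1) : ℚ) = ∑ m ∈ range (n+1), (m.choose j : ℚ) := by
      intro j
      rw [← hockeyN n j]; push_cast; ring
    calc ∑ j ∈ range (k+1), ((n+1).choose (j+1) : ℚ) * D j
        = ∑ j ∈ range (k+1), ∑ m ∈ range (n+1), (m.choose j : ℚ) * D j := by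
          refine sum_congr rfl fun j _ => ?_; rw [h1 j, sum_mul]
      _ = ∑ m ∈ range (n+1), ∑ j ∈ range (k+1), (m.choose j : ℚ) * D j := Finset.sum_comm
      _ = ∑ m ∈ range (n+1), ((m:ℚ) - n)^k := by
          refine sum_congr rfl fun m _ => ?_; exact pointwise k n m
  have reflect : ∑ m ∈ range (n+1), ((m:ℚ) - n)^k
      = (-1:ℚ)^k * (S k n + (if k = 0 then 1 else 0)) := by
    have h2 : ∑ m ∈ range (n+1), ((m:ℚ) - n)^k
        = ∑ t ∈ range (n+1), (-1:ℚ)^k * (t:ℚ)^k := by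
      rw [← Finset.sum_range_reflect (fun m => ((m:ℚ) - n)^k) (n+1)]
      refine sum_congr rfl fun t ht => ?_
      have ht' : t ≤ n := by simpa [Nat.lt_succ_iff] using ht
      have : ((n + 1 - 1 - t : ℕ) : ℚ) = (n:ℚ) - t := by
        push_cast [Nat.sub_sub, show n + 1 - (1 + t) = n - t from by omega, Nat.cast_sub ht']
        ring
      rw [this]
      rw [show (n:ℚ) - t - n = -(t:ℚ) by ring, neg_pow]
    rw [h2, ← mul_sum]
    congr 1
    rw [Finset.sum_range_succ' (fun t => (t:ℚ)^k) n]
    simp only [Nat.cast_zero]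
    rw [zero_pow_eq, S]
    push_cast
    rfl
  have hsum : ∑ j ∈ range (k+1), (j.factorial : ℚ) * ((n + 1).choose (j + 1) : ℚ) * nSt k j n
      = (-1:ℚ)^k * (S k n + (if k = 0 then 1 else 0)) := by
    rw [sum_congr rfl fun j _ => hfac j, main, reflect]
  rw [hsum]
  have hsq : (-1:ℚ)^k * (-1)^k = 1 := by rw [← mul_pow]; norm_num
  rcases eq_or_ne k 0 with h | h
  · subst h; norm_num
  · rw [if_neg h]
    rw [neg_zero, zero_add, add_zero, ← mul_assoc, hsq, one_mul]
end

section
/- For any non-negative integers k and r, (-1)^k · S_k(r) = -[k=0] + Σ_{j=0}^{k} j! · C(r+1, j+1) · {k,j}_{-r}, where {k,j}_{-r} = (1/j!) Σ_{i=0}^{j} (-1)^{j-i} C(j,i) (i-r)^k. -/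
open Finset
open scoped fwdDiff

lemma aux_fwdDiff_pow (k : ℕ) (c : ℚ) :
    Δ_[(1:ℕ)] (fun i : ℕ ↦ ((i : ℚ) + c) ^ k)
      = ∑ t ∈ range k, (k.choose t : ℚ) • (fun i : ℕ ↦ ((i : ℚ) + c) ^ t) := by
  ext i
  simp only [fwdDiff, Finset.sum_apply, Pi.smul_apply, smul_eq_mul]
  have h1 : (((i + 1 : ℕ) : ℚ) + c) = (((i : ℚ) + c) + 1) := by push_cast; ring
  rw [h1, add_pow]
  rw [Finset.sum_range_succ]
  simp only [one_pow, mul_one, Nat.choose_self, Nat.cast_one, Nat.sub_self, pow_zero]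
  rw [add_sub_cancel_right]
  exact Finset.sum_congr rfl fun t _ ↦ by ring

lemma aux_vanish (k : ℕ) : ∀ c : ℚ, ∀ j : ℕ, k < j →
    Δ_[(1:ℕ)] ^[j] (fun i : ℕ ↦ ((i : ℚ) + c) ^ k) = 0 := by
  induction k using Nat.strong_induction_on with
  | _ k IH =>
    intro c j hj
    obtain ⟨j', rfl⟩ : ∃ j', j = j' + 1 := ⟨j - 1, by omega⟩
    rw [Function.iterate_succ_apply, aux_fwdDiff_pow, fwdDiff_iter_finset_sum]
    refine Finset.sum_eq_zero fun t ht ↦ ?_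
    rw [Finset.mem_range] at ht
    rw [fwdDiff_iter_const_smul, IH t ht c j' (by omega), smul_zero]

lemma aux_hockey (j : ℕ) : ∀ r : ℕ,
    ∑ m ∈ range (r + 1), m.choose j = (r + 1).choose (j + 1) := by
  intro r
  induction r with
  | zero =>
    rcases j with _ | j <;> simp [Nat.choose]
  | succ r ih =>
    rw [Finset.sum_range_succ, ih, Nat.choose_succ_succ' (r + 1) j, Nat.add_comm]

theorem stmt14 (k r : ℕ) :
    (-1 : ℚ) ^ k * S k r = -(if k = 0 then (1 : ℚ) else 0) +
      ∑ j ∈ range (k + 1), (j.factorial : ℚ) * ((r + 1).choose (j + 1) : ℚ) * nSt k j r := by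
  set f : ℕ → ℚ := fun i ↦ ((i : ℚ) - r) ^ k with hf
  set D : ℕ → ℚ := fun j ↦ Δ_[(1:ℕ)] ^[j] f 0 with hD
  -- D j = j! * nSt k j r
  have hDnSt : ∀ j, D j = (j.factorial : ℚ) * nSt k j r := by
    intro j
    rw [hD]
    simp only [fwdDiff_iter_eq_sum_shift, zero_add, smul_eq_mul, nSt]
    rw [← mul_assoc, mul_one_div, div_self (Nat.cast_ne_zero.mpr j.factorial_ne_zero), one_mul]
    refine Finset.sum_congr rfl fun i _ ↦ ?_
    simp only [hf, smul_eq_mul, zsmul_eq_mul]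
    push_cast
    ring
  -- vanishing of high differences
  have hDzero : ∀ j, k < j → D j = 0 := by
    intro j hj
    have hfe : f = fun i : ℕ ↦ ((i : ℚ) + (-(r : ℚ))) ^ k := by
      ext i; simp [hf, sub_eq_add_neg]
    show Δ_[(1:ℕ)] ^[j] f 0 = 0
    rw [hfe, aux_vanish k (-(r:ℚ)) j hj]
    rfl
  -- Step 1 : ∑_{m ∈ range (r+1)} f m = (-1)^k * S k r + ite
  have step1 : ∑ m ∈ range (r + 1), f m
      = (-1 : ℚ) ^ k * S k r + (if k = 0 then (1 : ℚ) else 0) := by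
    rw [Finset.sum_range_succ]
    have hfr : f r = (if k = 0 then (1 : ℚ) else 0) := by
      simp [hf, sub_self, zero_pow_eq]
    rw [hfr]
    congr 1
    rw [← Finset.sum_range_reflect]
    rw [S, Finset.mul_sum]
    refine Finset.sum_congr rfl fun i hi ↦ ?_
    rw [Finset.mem_range] at hi
    have h1 : ((r - 1 - i : ℕ) : ℚ) = (r : ℚ) - 1 - i := by
      have : r - 1 - i = r - (1 + i) := by omega
      rw [this, Nat.cast_sub (by omega)]
      push_cast; ring
    simp only [hf, h1]
    have : (r : ℚ) - 1 - i - r = -((i : ℚ) + 1) := by ring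
    rw [this, neg_pow]
  -- Step 2 : Gregory–Newton + hockey stick
  have step2 : ∑ m ∈ range (r + 1), f m
      = ∑ j ∈ range (r + 1), ((r + 1).choose (j + 1) : ℚ) * D j := by
    have hm : ∀ m ∈ range (r + 1), f m = ∑ j ∈ range (r + 1), (m.choose j : ℚ) * D j := by
      intro m hm
      rw [Finset.mem_range] at hm
      have h0 : f m = ∑ j ∈ range (m + 1), m.choose j • D j := by
        have := shift_eq_sum_fwdDiff_iter (1 : ℕ) f m 0
        simpa using this
      have h1 : ∑ j ∈ range (r + 1), (m.choose j : ℚ) * D j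
          = ∑ j ∈ range (m + 1), (m.choose j : ℚ) * D j := by
        refine (Finset.sum_subset (Finset.range_subset_range.2 (by omega)) ?_).symm
        intro j _ hj
        rw [Finset.mem_range, not_lt] at hj
        simp [Nat.choose_eq_zero_of_lt (show m < j by omega)]
      rw [h0, h1]
      exact Finset.sum_congr rfl fun j _ ↦ nsmul_eq_mul _ _
    rw [Finset.sum_congr rfl hm, Finset.sum_comm]
    refine Finset.sum_congr rfl fun j _ ↦ ?_
    rw [← Finset.sum_mul, ← Nat.cast_sum, aux_hockey j r]
  -- Step 3 : change the summation range from r+1 to k+1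
  have step3 : ∑ j ∈ range (r + 1), ((r + 1).choose (j + 1) : ℚ) * D j
      = ∑ j ∈ range (k + 1), ((r + 1).choose (j + 1) : ℚ) * D j := by
    have e1 : ∑ j ∈ range (r + 1), ((r + 1).choose (j + 1) : ℚ) * D j
        = ∑ j ∈ range (k + r + 1), ((r + 1).choose (j + 1) : ℚ) * D j := by
      refine Finset.sum_subset (Finset.range_subset_range.2 (by omega)) ?_
      intro j _ hj
      rw [Finset.mem_range, not_lt] at hj
      rw [Nat.choose_eq_zero_of_lt (by omega), Nat.cast_zero, zero_mul]
    have e2 : ∑ j ∈ range (k + 1), ((r + 1).choose (j + 1) : ℚ) * D j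
        = ∑ j ∈ range (k + r + 1), ((r + 1).choose (j + 1) : ℚ) * D j := by
      refine Finset.sum_subset (Finset.range_subset_range.2 (by omega)) ?_
      intro j _ hj
      rw [Finset.mem_range, not_lt] at hj
      rw [hDzero j (by omega), mul_zero]
    rw [e1, ← e2]
  have final : ∑ j ∈ range (k + 1), ((r + 1).choose (j + 1) : ℚ) * D j
      = ∑ j ∈ range (k + 1), (j.factorial : ℚ) * ((r + 1).choose (j + 1) : ℚ) * nSt k j r := by
    refine Finset.sum_congr rfl fun j _ ↦ ?_
    rw [hDnSt j]; ring
  have := step1.symm.trans (step2.trans (step3.trans final))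
  linarith [this]
end

section
/- For any non-negative integer k ≥ 1, Σ_{j=0}^{k} (-1)^{k-j} · j! · C(k+1, j) · {k,j}_{k-j} = 1, where {k,j}_{k-j} = (1/j!) Σ_{i=0}^{j} (-1)^{j-i} C(j,i) (i+k-j)^k. -/
open Finset

open fwdDiff

lemma negone_pow_sub {a b : ℕ} (h : b ≤ a) : (-1 : ℚ) ^ (a - b) = (-1) ^ a * (-1) ^ b := by
  have h2 : (-1 : ℚ) ^ b * (-1 : ℚ) ^ b = 1 := by
    rw [← pow_add, ← two_mul, pow_mul]; norm_num
  have h1 : (-1 : ℚ) ^ (a - b) * ((-1 : ℚ) ^ b * (-1 : ℚ) ^ b)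
      = (-1 : ℚ) ^ a * (-1 : ℚ) ^ b := by
    rw [← mul_assoc, ← pow_add, Nat.sub_add_cancel h]
  rw [h2, mul_one] at h1
  exact h1

lemma alt_partial (N : ℕ) (hN : 1 ≤ N) :
    ∑ t ∈ range N, (-1 : ℚ) ^ (N - 1 - t) * (N.choose t : ℚ) = 1 := by
  have h0 : ∑ t ∈ range (N + 1), (-1 : ℚ) ^ t * (N.choose t : ℚ) = 0 := by
    have hb := add_pow (-1 : ℚ) 1 N
    simp only [neg_add_cancel, one_pow, mul_one] at hb
    rw [zero_pow (by omega : N ≠ 0)] at hb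
    exact hb.symm
  have h1 : ∑ t ∈ range N, (-1 : ℚ) ^ t * (N.choose t : ℚ) = -(-1 : ℚ) ^ N := by
    have := sum_range_succ (fun t => (-1 : ℚ) ^ t * (N.choose t : ℚ)) N
    rw [h0, Nat.choose_self] at this
    push_cast at this
    linarith [this]
  calc ∑ t ∈ range N, (-1 : ℚ) ^ (N - 1 - t) * (N.choose t : ℚ)
      = ∑ t ∈ range N, (-1 : ℚ) ^ (N - 1) * ((-1 : ℚ) ^ t * (N.choose t : ℚ)) := by
        refine sum_congr rfl fun t ht => ?_
        have htN : t < N := mem_range.mp ht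
        rw [negone_pow_sub (by omega : t ≤ N - 1), mul_assoc]
    _ = (-1 : ℚ) ^ (N - 1) * (-(-1 : ℚ) ^ N) := by rw [← mul_sum, h1]
    _ = 1 := by
        rw [mul_neg, ← pow_add]
        have : N - 1 + N = 2 * (N - 1) + 1 := by omega
        rw [this, pow_succ, pow_mul]
        norm_num

lemma fwdDiff_iter_pow_eq_zero : ∀ k : ℕ, ∀ c : ℚ, ∀ n : ℕ, k < n →
    (Δ_[(1:ℚ)])^[n] (fun x : ℚ => (x + c) ^ k) = 0 := by
  intro k
  induction k using Nat.strong_induction_on with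
  | _ k IH =>
    intro c n hn
    obtain ⟨n, rfl⟩ : ∃ m, n = m + 1 := ⟨n - 1, by omega⟩
    rw [Function.iterate_succ_apply]
    have hΔ : Δ_[(1:ℚ)] (fun x : ℚ => (x + c) ^ k)
        = ∑ j ∈ range k, ((k.choose j : ℕ) : ℚ) • (fun x : ℚ => (x + c) ^ j) := by
      ext x
      simp only [fwdDiff, Finset.sum_apply, Pi.smul_apply, smul_eq_mul]
      have hb := add_pow (x + c) 1 k
      simp only [one_pow, mul_one] at hb
      rw [show x + 1 + c = x + c + 1 by ring, hb, sum_range_succ, Nat.choose_self]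
      push_cast
      rw [mul_one, add_sub_cancel_right]
      exact sum_congr rfl fun j _ => mul_comm _ _
    rw [hΔ, fwdDiff_iter_finset_sum]
    refine sum_eq_zero fun j hj => ?_
    rw [fwdDiff_iter_const_smul, IH j (mem_range.mp hj) c n (by
      have := mem_range.mp hj; omega), smul_zero]

lemma key_sum (k : ℕ) (hk : 1 ≤ k) :
    ∑ m ∈ range (k + 1), (-1 : ℚ) ^ m * ((k + 1).choose m : ℚ) * ((k - m : ℕ) : ℚ) ^ k = 1 := by
  have hd := fwdDiff_iter_pow_eq_zero k (-1) (k + 1) (by omega)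
  have he := fwdDiff_iter_eq_sum_shift (1 : ℚ) (fun x : ℚ => (x + (-1)) ^ k) (k + 1) 0
  rw [hd] at he
  simp only [Pi.zero_apply, zsmul_eq_mul, smul_eq_mul, nsmul_eq_mul, mul_one, zero_add] at he
  push_cast at he
  -- he : 0 = ∑ i ∈ range (k+2), (-1)^(k+1-i) * C(k+1,i) * ((i:ℚ) + -1)^k
  rw [sum_range_succ'] at he
  have h0 : ((-1 : ℚ)) ^ (k + 1 - 0) * ((k + 1).choose 0 : ℚ) * (((0:ℕ) : ℚ) + -1) ^ k = -1 := by
    simp only [Nat.sub_zero, Nat.choose_zero_right, Nat.cast_one, mul_one, Nat.cast_zero, zero_add]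
    rw [← pow_add]
    have : k + 1 + k = 2 * k + 1 := by omega
    rw [this, pow_succ, pow_mul]
    norm_num
  rw [h0] at he
  have hS : ∑ m ∈ range (k + 1),
      (-1 : ℚ) ^ (k + 1 - (m + 1)) * ((k + 1).choose (m + 1) : ℚ) * (((m + 1 : ℕ) : ℚ) + -1) ^ k
      = 1 := by linarith [he]
  rw [← sum_range_reflect]
  refine Eq.trans (sum_congr rfl fun j hj => ?_) hS
  have hjk : j ≤ k := by have := mem_range.mp hj; omega
  have h1 : k + 1 - 1 - j = k - j := by omega
  have h2 : (k + 1).choose (k - j) = (k + 1).choose (j + 1) := by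
    rw [← Nat.choose_symm (by omega : j + 1 ≤ k + 1)]
    congr 1; omega
  have h3 : k - (k - j) = j := by omega
  have h4 : k + 1 - (j + 1) = k - j := by omega
  rw [h1, h2, h3, h4]
  push_cast
  ring_nf

theorem stmt17 (k : ℕ) (hk : 1 ≤ k) :
    (∑ j ∈ range (k + 1), (-1 : ℚ) ^ (k - j) * (j.factorial : ℚ) *
      ((k + 1).choose j : ℚ) * rSt k j ((k - j : ℕ) : ℚ)) = 1 := by
  have inner : ∀ j, j ≤ k →
      (∑ i ∈ range (j + 1),
        (-1 : ℚ) ^ (j - i) * (j.choose i : ℚ) * ((i : ℚ) + ((k - j : ℕ) : ℚ)) ^ k)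
      = ∑ m ∈ range (k + 1), (-1 : ℚ) ^ m * (j.choose m : ℚ) * ((k - m : ℕ) : ℚ) ^ k := by
    intro j hjk
    rw [← sum_range_reflect]
    have hstep : ∀ m ∈ range (j + 1),
        (-1 : ℚ) ^ (j - (j + 1 - 1 - m)) * (j.choose (j + 1 - 1 - m) : ℚ) *
          (((j + 1 - 1 - m : ℕ) : ℚ) + ((k - j : ℕ) : ℚ)) ^ k
        = (-1 : ℚ) ^ m * (j.choose m : ℚ) * ((k - m : ℕ) : ℚ) ^ k := by
      intro m hm
      have hmj : m ≤ j := by have := mem_range.mp hm; omega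
      have e1 : j + 1 - 1 - m = j - m := by omega
      have e2 : j - (j - m) = m := by omega
      have e3 : j.choose (j - m) = j.choose m := Nat.choose_symm hmj
      have e4 : ((j - m : ℕ) : ℚ) + ((k - j : ℕ) : ℚ) = ((k - m : ℕ) : ℚ) := by
        rw [← Nat.cast_add]; congr 1; omega
      rw [e1, e2, e3, e4]
    rw [sum_congr rfl hstep]
    refine sum_subset (range_subset_range.mpr (by omega)) fun m _ hm => ?_
    have hjm : j < m := by
      by_contra h
      exact hm (mem_range.mpr (by omega))
    rw [Nat.choose_eq_zero_of_lt hjm]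
    simp
  have step1 : ∀ j ∈ range (k + 1),
      (-1 : ℚ) ^ (k - j) * (j.factorial : ℚ) * ((k + 1).choose j : ℚ) *
        rSt k j ((k - j : ℕ) : ℚ)
      = ∑ m ∈ range (k + 1), (-1 : ℚ) ^ (k - j) * (((k + 1).choose j : ℚ) *
          ((-1 : ℚ) ^ m * (j.choose m : ℚ) * ((k - m : ℕ) : ℚ) ^ k)) := by
    intro j hj
    have hjk : j ≤ k := by have := mem_range.mp hj; omega
    rw [rSt, inner j hjk, ← mul_sum, ← mul_sum]
    have hfac : (j.factorial : ℚ) ≠ 0 := Nat.cast_ne_zero.mpr j.factorial_ne_zero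
    field_simp
  rw [sum_congr rfl step1, sum_comm]
  have step2 : ∀ m ∈ range (k + 1),
      (∑ j ∈ range (k + 1), (-1 : ℚ) ^ (k - j) * (((k + 1).choose j : ℚ) *
          ((-1 : ℚ) ^ m * (j.choose m : ℚ) * ((k - m : ℕ) : ℚ) ^ k)))
      = (-1 : ℚ) ^ m * ((k + 1).choose m : ℚ) * ((k - m : ℕ) : ℚ) ^ k := by
    intro m hm
    have hmk : m ≤ k := by have := mem_range.mp hm; omega
    have hI : ∑ j ∈ range (k + 1),
        (-1 : ℚ) ^ (k - j) * (((k + 1).choose j : ℚ) * (j.choose m : ℚ))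
        = ((k + 1).choose m : ℚ) := by
      have hsub : Ico m (k + 1) ⊆ range (k + 1) := by
        intro x hx; rw [mem_range]; exact (mem_Ico.mp hx).2
      have hzero : ∀ j ∈ range (k + 1), j ∉ Ico m (k + 1) →
          (-1 : ℚ) ^ (k - j) * (((k + 1).choose j : ℚ) * (j.choose m : ℚ)) = 0 := by
        intro j hjr hjm
        have hj2 : ¬ (m ≤ j ∧ j < k + 1) := fun h => hjm (mem_Ico.mpr h)
        have hj1 := mem_range.mp hjr
        rw [Nat.choose_eq_zero_of_lt (show j < m by omega)]
        simp
      rw [← sum_subset hsub hzero, sum_Ico_eq_sum_range]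
      have hterm : ∀ t ∈ range (k + 1 - m),
          (-1 : ℚ) ^ (k - (m + t)) * (((k + 1).choose (m + t) : ℚ) * ((m + t).choose m : ℚ))
          = ((k + 1).choose m : ℚ) *
              ((-1 : ℚ) ^ (k + 1 - m - 1 - t) * (((k + 1 - m).choose t : ℚ))) := by
        intro t ht
        have htk : t < k + 1 - m := mem_range.mp ht
        have hc := Nat.choose_mul (n := k + 1) (show m ≤ m + t by omega)
        have hc' : ((k + 1).choose (m + t) : ℚ) * ((m + t).choose m : ℚ)
            = ((k + 1).choose m : ℚ) * (((k + 1 - m).choose t : ℚ)) := by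
          rw [← Nat.cast_mul, ← Nat.cast_mul, hc, Nat.add_sub_cancel_left]
        rw [hc']
        have he : k - (m + t) = k + 1 - m - 1 - t := by omega
        rw [he]; ring
      rw [sum_congr rfl hterm, ← mul_sum, alt_partial (k + 1 - m) (by omega), mul_one]
    calc (∑ j ∈ range (k + 1), (-1 : ℚ) ^ (k - j) * (((k + 1).choose j : ℚ) *
          ((-1 : ℚ) ^ m * (j.choose m : ℚ) * ((k - m : ℕ) : ℚ) ^ k)))
        = ((-1 : ℚ) ^ m * ((k - m : ℕ) : ℚ) ^ k) *
            ∑ j ∈ range (k + 1), (-1 : ℚ) ^ (k - j) *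
              (((k + 1).choose j : ℚ) * (j.choose m : ℚ)) := by
          rw [mul_sum]; exact sum_congr rfl fun j _ => by ring
      _ = (-1 : ℚ) ^ m * ((k + 1).choose m : ℚ) * ((k - m : ℕ) : ℚ) ^ k := by
          rw [hI]; ring
  rw [sum_congr rfl step2]
  exact key_sum k hk
end

section
/- For any non-negative integer k and any rational x, B_k(x-1) = Σ_{j=0}^{k} (-1)^j · j! · H_{j+1} · R_{k,j}(x), where B_k is the k-th Bernoulli polynomial, H_m = Σ_{i=1}^{m} 1/i is the m-th harmonic number, and R_{k,j}(x) = (1/j!) Σ_{i=0}^{j} (-1)^{j-i} C(j,i) (i+x)^k. -/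
open Finset

/-- Finite difference sum: `dd j k x = Σ_{i=0}^{j} (-1)^{j-i} C(j,i) (x+i)^k`. -/
def dd (j k : ℕ) (x : ℚ) : ℚ :=
  ∑ i ∈ range (j + 1), (-1 : ℚ) ^ (j - i) * (j.choose i : ℚ) * (x + (i : ℚ)) ^ k

lemma neg_pow_sub {m j : ℕ} (h : m ≤ j) : (-1 : ℚ) ^ (j - m) * (-1 : ℚ) ^ m = (-1 : ℚ) ^ j := by
  rw [← pow_add]; congr 1; omega

lemma neg_pow_sub' {m j : ℕ} (h : m ≤ j) : (-1 : ℚ) ^ (j - m) = (-1 : ℚ) ^ j * (-1 : ℚ) ^ m := by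
  rw [← neg_pow_sub h, mul_assoc, ← pow_add, ← two_mul, pow_mul]
  norm_num

lemma dd_pascal (j k : ℕ) (x : ℚ) : dd (j+1) k x = dd j k (x+1) - dd j k x := by
  have h1 : dd (j+1) k x = (∑ i ∈ range (j+1),
      ((-1 : ℚ) ^ (j - i) * (j.choose i : ℚ) * ((x+1) + (i:ℚ)) ^ k
        + (-1 : ℚ) ^ (j - i) * (j.choose (i+1) : ℚ) * ((x+1) + (i:ℚ)) ^ k))
      + (-1 : ℚ) ^ (j+1) * x ^ k := by
    unfold dd
    rw [Finset.sum_range_succ' _ (j+1)]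
    congr 1
    · apply Finset.sum_congr rfl
      intro i hi
      simp only [mem_range] at hi
      rw [Nat.choose_succ_succ, show j + 1 - (i+1) = j - i from by omega]
      push_cast
      ring
    · simp
  have h2 : (∑ i ∈ range (j+1), (-1 : ℚ) ^ (j - i) * (j.choose (i+1) : ℚ) * ((x+1) + (i:ℚ)) ^ k)
      = - dd j k x + (-1 : ℚ) ^ j * x ^ k := by
    have e1 : dd j k x = (∑ i ∈ range j,
        (-1 : ℚ) ^ (j - (i+1)) * (j.choose (i+1) : ℚ) * ((x+1) + (i:ℚ)) ^ k) + (-1 : ℚ) ^ j * x ^ k := by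
      unfold dd
      rw [Finset.sum_range_succ' _ j]
      congr 1
      · apply Finset.sum_congr rfl
        intro i hi
        push_cast
        ring
      · simp
    have e2 : (∑ i ∈ range (j+1), (-1 : ℚ) ^ (j - i) * (j.choose (i+1) : ℚ) * ((x+1) + (i:ℚ)) ^ k)
        = ∑ i ∈ range j, (-1 : ℚ) ^ (j - i) * (j.choose (i+1) : ℚ) * ((x+1) + (i:ℚ)) ^ k := by
      rw [Finset.sum_range_succ, Nat.choose_succ_self]
      simp
    have e3 : (∑ i ∈ range j, (-1 : ℚ) ^ (j - i) * (j.choose (i+1) : ℚ) * ((x+1) + (i:ℚ)) ^ k)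
        = - ∑ i ∈ range j, (-1 : ℚ) ^ (j - (i+1)) * (j.choose (i+1) : ℚ) * ((x+1) + (i:ℚ)) ^ k := by
      rw [← Finset.sum_neg_distrib]
      apply Finset.sum_congr rfl
      intro i hi
      simp only [mem_range] at hi
      rw [show j - i = (j - (i+1)) + 1 from by omega, pow_succ]
      ring
    rw [e2, e3]
    linarith [e1]
  rw [h1, Finset.sum_add_distrib, h2]
  have : (∑ i ∈ range (j+1), (-1 : ℚ) ^ (j - i) * (j.choose i : ℚ) * ((x+1) + (i:ℚ)) ^ k)
      = dd j k (x+1) := rfl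
  rw [this, pow_succ]
  ring

lemma dd_zero_pow (j : ℕ) (x : ℚ) : dd (j+1) 0 x = 0 := by
  unfold dd
  simp only [pow_zero, mul_one]
  have key : ∀ i ∈ range (j+2), (-1 : ℚ) ^ (j + 1 - i) * ((j+1).choose i : ℚ)
      = (-1 : ℚ) ^ (j+1) * ((-1 : ℚ) ^ i * ((j+1).choose i : ℚ)) := by
    intro i hi
    simp only [Finset.mem_range] at hi
    rw [neg_pow_sub' (show i ≤ j + 1 by omega), mul_assoc]
  rw [Finset.sum_congr rfl key, ← Finset.mul_sum]
  have h := Int.alternating_sum_range_choose (n := j+1)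
  rw [if_neg (by omega)] at h
  have h2 : (∑ i ∈ range (j+1+1), (-1 : ℚ) ^ i * ((j+1).choose i : ℚ)) = 0 := by
    exact_mod_cast congrArg (fun z : ℤ => (z : ℚ)) h
  rw [h2, mul_zero]

lemma dd_rec (j k : ℕ) (x : ℚ) :
    dd (j+1) (k+1) x = x * dd (j+1) k x + ((j:ℚ)+1) * dd j k (x+1) := by
  unfold dd
  have expand : ∀ i ∈ range (j+2),
      (-1 : ℚ) ^ (j + 1 - i) * ((j+1).choose i : ℚ) * (x + (i:ℚ)) ^ (k+1)
      = x * ((-1 : ℚ) ^ (j + 1 - i) * ((j+1).choose i : ℚ) * (x + (i:ℚ)) ^ k)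
        + (-1 : ℚ) ^ (j + 1 - i) * (((j+1).choose i : ℚ) * (i:ℚ)) * (x + (i:ℚ)) ^ k := by
    intro i _
    rw [pow_succ]
    ring
  rw [Finset.sum_congr rfl expand, Finset.sum_add_distrib, ← Finset.mul_sum]
  congr 1
  rw [Finset.sum_range_succ' (fun i => (-1 : ℚ) ^ (j + 1 - i) * (((j+1).choose i : ℚ) * (i:ℚ)) * (x + (i:ℚ)) ^ k) (j+1)]
  simp only [Nat.cast_zero, mul_zero, zero_mul, add_zero]
  rw [Finset.mul_sum]
  apply Finset.sum_congr rfl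
  intro i hi
  simp only [mem_range] at hi
  have hc : ((j+1).choose (i+1) : ℚ) * ((i:ℚ)+1) = ((j:ℚ)+1) * (j.choose i : ℚ) := by
    have hn : (j+1) * j.choose i = (j+1).choose (i+1) * (i+1) := Nat.add_one_mul_choose_eq j i
    exact_mod_cast congrArg (fun n : ℕ => (n : ℚ)) hn.symm
  rw [show j + 1 - (i+1) = j - i from by omega]
  push_cast
  linear_combination ((-1 : ℚ) ^ (j - i) * (x + (i:ℚ) + 1) ^ k) * hc

lemma dd_vanish : ∀ k j : ℕ, ∀ x : ℚ, k < j → dd j k x = 0 := by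
  intro k
  induction k with
  | zero =>
    intro j x hj
    obtain ⟨j', rfl⟩ : ∃ j', j = j' + 1 := ⟨j - 1, by omega⟩
    exact dd_zero_pow j' x
  | succ k ih =>
    intro j x hj
    obtain ⟨j', rfl⟩ : ∃ j', j = j' + 1 := ⟨j - 1, by omega⟩
    rw [dd_rec, ih (j'+1) x (by omega), ih j' (x+1) (by omega)]
    ring

/-- `dd (j+1) (m+1) 0 = (j+1) * (dd (j+1) m 0 + dd j m 0)` (Stirling recurrence). -/
lemma dd_stirling_rec (j m : ℕ) :
    dd (j+1) (m+1) 0 = ((j:ℚ)+1) * (dd (j+1) m 0 + dd j m 0) := by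
  have h1 := dd_rec j m 0
  have h2 := dd_pascal j m 0
  rw [zero_add] at h1 h2
  rw [h1]
  rw [show dd j m 1 = dd (j+1) m 0 + dd j m 0 from by linarith]
  ring

lemma dd_zero_zero (m : ℕ) : dd 0 m 0 = if m = 0 then 1 else 0 := by
  unfold dd
  rw [Finset.sum_range_one]
  rcases Nat.eq_zero_or_pos m with hm | hm
  · subst hm; norm_num
  · rw [if_neg (by omega), Nat.cast_zero, add_zero, zero_pow (by omega : m ≠ 0)]
    ring

/-- Key alternating sum: `Σ_{j<K} (-1)^j/(j+1) · dd (j+1) (m+1) 0 = [m = 0]`. -/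
lemma dd_log_sum (m K : ℕ) (h : m < K) :
    ∑ j ∈ range K, (-1 : ℚ) ^ j * (1/((j:ℚ)+1)) * dd (j+1) (m+1) 0
      = if m = 0 then 1 else 0 := by
  have step : ∀ j ∈ range K, (-1 : ℚ) ^ j * (1/((j:ℚ)+1)) * dd (j+1) (m+1) 0
      = (-1 : ℚ) ^ (j+1+1) * dd (j+1) m 0 - (-1 : ℚ) ^ (j+1) * dd j m 0 := by
    intro j _
    rw [dd_stirling_rec j m]
    have hne : ((j:ℚ)+1) ≠ 0 := by positivity
    field_simp
    rw [pow_succ, pow_succ]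
    ring
  rw [Finset.sum_congr rfl step,
    Finset.sum_range_sub (fun j => (-1 : ℚ) ^ (j+1) * dd j m 0) K]
  rw [dd_vanish m K 0 h, dd_zero_zero m]
  split_ifs <;> norm_num

lemma dd_log_sum' (p K : ℕ) (hp : p ≤ K) :
    ∑ j ∈ range K, (-1 : ℚ) ^ j * (1/((j:ℚ)+1)) * dd (j+1) p 0
      = if p = 1 then 1 else 0 := by
  rcases p with _ | m
  · rw [if_neg (by omega)]
    apply Finset.sum_eq_zero
    intro j _
    rw [dd_zero_pow j 0, mul_zero]
  · rw [dd_log_sum m K (by omega)]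
    rcases Nat.eq_zero_or_pos m with hm | hm
    · subst hm; norm_num
    · rw [if_neg (by omega), if_neg (by omega)]

lemma dd_expand (J p : ℕ) (x : ℚ) :
    dd J p x = ∑ m ∈ range (p+1), (p.choose m : ℚ) * x ^ m * dd J (p - m) 0 := by
  unfold dd
  have e : ∀ i ∈ range (J+1), (-1:ℚ)^(J-i) * (J.choose i : ℚ) * (x + (i:ℚ))^p
      = ∑ m ∈ range (p+1), (p.choose m : ℚ) * x^m *
          ((-1:ℚ)^(J-i) * (J.choose i : ℚ) * ((0:ℚ) + (i:ℚ))^(p-m)) := by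
    intro i _
    rw [add_pow, Finset.mul_sum]
    apply Finset.sum_congr rfl
    intro m _
    rw [zero_add]
    ring
  rw [Finset.sum_congr rfl e, Finset.sum_comm]
  apply Finset.sum_congr rfl
  intro m _
  rw [← Finset.mul_sum]

lemma star (k : ℕ) (x : ℚ) :
    ∑ j ∈ range (k+1), (-1:ℚ)^j * (1/((j:ℚ)+1)) * dd (j+1) (k+1) x
      = ((k:ℚ)+1) * x^k := by
  have e : ∀ j ∈ range (k+1), (-1:ℚ)^j * (1/((j:ℚ)+1)) * dd (j+1) (k+1) x
      = ∑ m ∈ range (k+2), ((k+1).choose m : ℚ) * x^m *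
          ((-1:ℚ)^j * (1/((j:ℚ)+1)) * dd (j+1) (k+1-m) 0) := by
    intro j _
    rw [dd_expand (j+1) (k+1) x, Finset.mul_sum]
    apply Finset.sum_congr rfl
    intro m _
    ring
  rw [Finset.sum_congr rfl e, Finset.sum_comm]
  have e2 : ∀ m ∈ range (k+2),
      (∑ j ∈ range (k+1), ((k+1).choose m : ℚ) * x^m *
        ((-1:ℚ)^j * (1/((j:ℚ)+1)) * dd (j+1) (k+1-m) 0))
      = ((k+1).choose m : ℚ) * x^m * (if k+1-m = 1 then 1 else 0) := by
    intro m hm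
    rw [← Finset.mul_sum, dd_log_sum' (k+1-m) (k+1) (by omega)]
  rw [Finset.sum_congr rfl e2]
  rw [Finset.sum_eq_single_of_mem k (by simp)]
  · rw [if_pos (by omega), Nat.choose_succ_self_right]
    push_cast
    ring
  · intro b hb hbk
    simp only [mem_range] at hb
    rw [if_neg (by omega), mul_zero]

lemma binom_tail (K : ℕ) (y : ℚ) :
    ∑ i ∈ range (K+1), ((K+1).choose i : ℚ) * y^i = (y+1)^(K+1) - y^(K+1) := by
  have h := add_pow y 1 (K+1)
  rw [Finset.sum_range_succ] at h
  simp only [one_pow, mul_one, Nat.choose_self, Nat.cast_one] at h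
  have e : ∑ i ∈ range (K+1), ((K+1).choose i : ℚ) * y^i
      = ∑ i ∈ range (K+1), y^i * ((K+1).choose i : ℚ) :=
    Finset.sum_congr rfl (fun i _ => mul_comm _ _)
  rw [e]
  linarith [h]

lemma binom_dd (k j : ℕ) (x : ℚ) :
    ∑ i ∈ range (k+1), ((k+1).choose i : ℚ) * dd j i x = dd (j+1) (k+1) x := by
  unfold dd
  rw [Finset.sum_congr rfl (fun i _ => Finset.mul_sum _ _ _)]
  rw [Finset.sum_comm]
  have e : ∀ m ∈ range (j+1),
      (∑ i ∈ range (k+1), ((k+1).choose i : ℚ) * ((-1:ℚ)^(j-m) * (j.choose m : ℚ) * (x + (m:ℚ))^i))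
      = (-1:ℚ)^(j-m) * (j.choose m : ℚ) * (((x + (m:ℚ))+1)^(k+1) - (x + (m:ℚ))^(k+1)) := by
    intro m _
    have e1 : ∀ i ∈ range (k+1), ((k+1).choose i : ℚ) * ((-1:ℚ)^(j-m) * (j.choose m : ℚ) * (x + (m:ℚ))^i)
        = (-1:ℚ)^(j-m) * (j.choose m : ℚ) * (((k+1).choose i : ℚ) * (x + (m:ℚ))^i) := by
      intro i _; ring
    rw [Finset.sum_congr rfl e1, ← Finset.mul_sum, binom_tail k (x + (m:ℚ))]
  have h := dd_pascal j (k+1) x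
  unfold dd at h
  rw [Finset.sum_congr rfl e, h, ← Finset.sum_sub_distrib]
  apply Finset.sum_congr rfl
  intro m _
  ring

lemma starstar (k : ℕ) (x : ℚ) :
    ∑ i ∈ range (k+1), ((k+1).choose i : ℚ) *
      (∑ j ∈ range (i+1), (-1:ℚ)^j * (1/((j:ℚ)+1)) * dd j i x)
    = ((k:ℚ)+1) * x^k := by
  have ext : ∀ i ∈ range (k+1),
      ((k+1).choose i : ℚ) * (∑ j ∈ range (i+1), (-1:ℚ)^j * (1/((j:ℚ)+1)) * dd j i x)
      = ∑ j ∈ range (k+1), ((k+1).choose i : ℚ) * ((-1:ℚ)^j * (1/((j:ℚ)+1)) * dd j i x) := by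
    intro i hi
    simp only [mem_range] at hi
    rw [← Finset.mul_sum]
    congr 1
    apply Finset.sum_subset (Finset.range_subset_range.mpr (by omega))
    intro j _ hj
    simp only [mem_range, not_lt] at hj
    rw [dd_vanish i j x (by omega), mul_zero]
  rw [Finset.sum_congr rfl ext, Finset.sum_comm]
  have e2 : ∀ j ∈ range (k+1),
      (∑ i ∈ range (k+1), ((k+1).choose i : ℚ) * ((-1:ℚ)^j * (1/((j:ℚ)+1)) * dd j i x))
      = (-1:ℚ)^j * (1/((j:ℚ)+1)) * dd (j+1) (k+1) x := by
    intro j _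
    rw [← binom_dd k j x, Finset.mul_sum]
    apply Finset.sum_congr rfl
    intro i _
    ring
  rw [Finset.sum_congr rfl e2, star]

lemma worpitzky : ∀ k : ℕ, ∀ x : ℚ, (Polynomial.bernoulli k).eval x
    = ∑ j ∈ range (k+1), (-1:ℚ)^j * (1/((j:ℚ)+1)) * dd j k x := by
  intro k
  induction k using Nat.strong_induction_on with
  | _ k ih =>
    intro x
    have hb := congrArg (Polynomial.eval x) (Polynomial.sum_bernoulli k)
    simp only [Polynomial.eval_finset_sum, Polynomial.eval_smul, Polynomial.eval_monomial,
      smul_eq_mul] at hb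
    have hss := starstar k x
    rw [Finset.sum_range_succ] at hb hss
    rw [Finset.sum_congr rfl (fun i hi => by rw [ih i (mem_range.mp hi) x])] at hb
    have hch : (((k+1).choose k : ℕ) : ℚ) = (k:ℚ)+1 := by
      rw [Nat.choose_succ_self_right]; push_cast; ring
    rw [hch] at hb hss
    have hpos : ((k:ℚ)+1) ≠ 0 := by positivity
    apply mul_left_cancel₀ hpos
    linarith [hb, hss]

lemma dd_telescope (k : ℕ) (x : ℚ) : ∀ t m : ℕ, m + t = k + 1 →
    dd m k (x-1) = ∑ j ∈ Ico m (k+1), (-1:ℚ)^(j-m) * dd j k x := by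
  intro t
  induction t with
  | zero =>
    intro m hm
    have : m = k + 1 := by omega
    subst this
    rw [Finset.Ico_self, Finset.sum_empty]
    exact dd_vanish k (k+1) (x-1) (by omega)
  | succ t iht =>
    intro m hm
    have hmk : m < k + 1 := by omega
    have hp := dd_pascal m k (x-1)
    rw [show x - 1 + 1 = x from by ring] at hp
    have e : dd m k (x-1) = dd m k x - dd (m+1) k (x-1) := by linarith
    rw [e, iht (m+1) (by omega)]
    rw [Finset.sum_eq_sum_Ico_succ_bot hmk]
    rw [Nat.sub_self, pow_zero, one_mul, sub_eq_add_neg, ← Finset.sum_neg_distrib]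
    congr 1
    apply Finset.sum_congr rfl
    intro j hj
    simp only [Finset.mem_Ico] at hj
    rw [show j - m = (j - (m+1)) + 1 from by omega, pow_succ]
    ring

lemma sum_triangle (n : ℕ) (g : ℕ → ℕ → ℚ) :
    ∑ m ∈ range n, ∑ j ∈ Ico m n, g m j = ∑ j ∈ range n, ∑ m ∈ range (j+1), g m j := by
  have e1 : ∀ m ∈ range n, ∑ j ∈ Ico m n, g m j
      = ∑ j ∈ range n, if m ≤ j then g m j else 0 := by
    intro m _
    rw [← Finset.sum_filter]
    congr 1
    ext a
    simp only [Finset.mem_filter, Finset.mem_range, Finset.mem_Ico]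
    omega
  have e2 : ∀ j ∈ range n, ∑ m ∈ range (j+1), g m j
      = ∑ m ∈ range n, if m ≤ j then g m j else 0 := by
    intro j hj
    simp only [Finset.mem_range] at hj
    rw [← Finset.sum_filter]
    congr 1
    ext a
    simp only [Finset.mem_filter, Finset.mem_range]
    omega
  rw [Finset.sum_congr rfl e1, Finset.sum_congr rfl e2, Finset.sum_comm]

theorem stmt18 (k : ℕ) (x : ℚ) :
    (Polynomial.bernoulli k).eval (x - 1) = ∑ j ∈ range (k + 1),
      (-1 : ℚ) ^ j * (j.factorial : ℚ) * (∑ i ∈ range (j + 1), 1 / ((i : ℚ) + 1)) *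
      rSt k j x := by
  have hr : ∀ j : ℕ, (-1 : ℚ) ^ j * (j.factorial : ℚ) *
      (∑ i ∈ range (j + 1), 1 / ((i : ℚ) + 1)) * rSt k j x
      = (-1 : ℚ) ^ j * (∑ i ∈ range (j + 1), 1 / ((i : ℚ) + 1)) * dd j k x := by
    intro j
    have hf : (j.factorial : ℚ) ≠ 0 := by exact_mod_cast j.factorial_ne_zero
    have hd : dd j k x = ∑ i ∈ range (j + 1),
        (-1 : ℚ) ^ (j - i) * (j.choose i : ℚ) * ((i : ℚ) + x) ^ k := by
      unfold dd
      exact Finset.sum_congr rfl (fun i _ => by rw [add_comm x (i:ℚ)])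
    rw [rSt, ← hd]
    field_simp
  rw [Finset.sum_congr rfl (fun j _ => hr j)]
  rw [worpitzky k (x-1)]
  have e : ∀ m ∈ range (k+1), (-1:ℚ)^m * (1/((m:ℚ)+1)) * dd m k (x-1)
      = ∑ j ∈ Ico m (k+1), (-1:ℚ)^m * (1/((m:ℚ)+1)) * ((-1:ℚ)^(j-m) * dd j k x) := by
    intro m hm
    simp only [mem_range] at hm
    rw [dd_telescope k x (k+1-m) m (by omega), Finset.mul_sum]
  rw [Finset.sum_congr rfl e, sum_triangle]
  apply Finset.sum_congr rfl
  intro j hj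
  simp only [mem_range] at hj
  have e2 : ∀ m ∈ range (j+1), (-1:ℚ)^m * (1/((m:ℚ)+1)) * ((-1:ℚ)^(j-m) * dd j k x)
      = (-1:ℚ)^j * dd j k x * (1/((m:ℚ)+1)) := by
    intro m hm
    simp only [mem_range] at hm
    rw [show (-1:ℚ)^j = (-1:ℚ)^(j-m) * (-1:ℚ)^m from (neg_pow_sub (by omega)).symm]
    ring
  rw [Finset.sum_congr rfl e2, ← Finset.mul_sum]
  ring
end
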